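/- Let U1 and U2 be self-adjoint 3×3 matrices of linear forms over ℂ (i.e., Uᵢ(z) = Uᵢ(z)* for all real z) giving determinantal representations of the same smooth cubic surface S and corresponding to the same six skew lines. If U2 = X·U1·Y with X,Y ∈ GL₃(ℂ), then Y = k·X* for some nonzero real number k; consequently U1 and U2 are equivalent if and only if U1 is hermitean equivalent to U2 or to −U2. -/

import Mathlib

open MvPolynomial Matrix

/-!
Write `U(z) = Σ zₘ Aₘ`. If `B = X·A·Y` with `A`, `B` hermitian, then `W = Y·(X*)⁻¹` satisfies
`U(z)·W = W*·U(z)`, so `W` maps every kernel of `U(z)` into itself. By Jacobi's formula the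
gradient of `det U` vanishes wherever `U(z)` has a kernel of dimension at least two, so on the
smooth surface `det U = 0` every kernel is a line; and every vector `v` lies in some kernel, since
`z ↦ U(z) v` is a linear map `ℂ⁴ → ℂ³`. Hence every vector is an eigenvector of `W`, so
`W = k`, i.e. `Y = k·X*`, and `B = k·X A X*` being hermitian forces `k` to be real. Rescaling `X`
by `√|k|` gives the hermitian equivalence with `B` or `−B`.
-/

namespace Derivation

variable {R A M : Type*} [CommSemiring R] [CommRing A] [AddCommGroup M] [Algebra R A]
  [Module A M] [Module R M]

theorem map_finset_prod {ι : Type*} [DecidableEq ι] (D : Derivation R A M) (s : Finset ι)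
    (f : ι → A) : D (∏ i ∈ s, f i) = ∑ i ∈ s, (∏ j ∈ s.erase i, f j) • D (f i) := by
  induction s using Finset.induction_on with
  | empty => simp
  | insert a s ha ih =>
    rw [Finset.prod_insert ha, leibniz, ih, Finset.sum_insert ha, Finset.erase_insert ha,
      Finset.smul_sum, add_comm]
    congr 1
    refine Finset.sum_congr rfl fun i hi => ?_
    rw [Finset.erase_insert_of_ne (ne_of_mem_of_not_mem hi ha).symm,
      Finset.prod_insert (fun h => ha (Finset.mem_of_mem_erase h)), mul_smul]

variable {n : Type*} [Fintype n] [DecidableEq n]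

theorem map_det_eq_sum_det_updateCol (D : Derivation R A A) (N : Matrix n n A) :
    D N.det = ∑ j, (N.updateCol j fun i => D (N i j)).det := by
  simp only [det_apply, map_sum, Derivation.map_smul_of_tower, map_finset_prod, Finset.smul_sum]
  rw [Finset.sum_comm]
  refine Finset.sum_congr rfl fun j _ => Finset.sum_congr rfl fun σ _ => ?_
  rw [← Finset.prod_erase_mul _ _ (Finset.mem_univ j), smul_eq_mul]
  congr 2
  · exact Finset.prod_congr rfl fun i hi => by rw [updateCol_ne (Finset.ne_of_mem_erase hi)]
  · rw [updateCol_self]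

theorem map_det (D : Derivation R A A) (N : Matrix n n A) :
    D N.det = ∑ j, (N.updateRow j fun k => D (N j k)).det := by
  rw [← det_transpose, map_det_eq_sum_det_updateCol]
  simp only [transpose_apply, updateCol_transpose, det_transpose]

end Derivation

namespace Matrix

variable {m n K : Type*} [Fintype n] [Field K]

theorem exists_mulVec_eq_zero_dotProduct_eq_zero {N : Matrix m n K} {v w : n → K}
    (hvw : LinearIndependent K ![v, w]) (hv : N *ᵥ v = 0) (hw : N *ᵥ w = 0) (r : n → K) :
    ∃ x ≠ 0, N *ᵥ x = 0 ∧ r ⬝ᵥ x = 0 := by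
  by_cases hr : r ⬝ᵥ v = 0 ∧ r ⬝ᵥ w = 0
  · exact ⟨v, hvw.ne_zero 0, hv, hr.1⟩
  refine ⟨(r ⬝ᵥ w) • v + (-(r ⬝ᵥ v)) • w, fun h => hr ?_, ?_, ?_⟩
  · obtain ⟨hw', hv'⟩ := LinearIndependent.pair_iff.mp hvw _ _ h
    exact ⟨neg_eq_zero.mp hv', hw'⟩
  · rw [mulVec_add, mulVec_smul, mulVec_smul, hv, hw, smul_zero, smul_zero, add_zero]
  · simp only [dotProduct_add, dotProduct_smul, smul_eq_mul]
    ring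

theorem det_updateRow_eq_zero_of_linearIndependent [DecidableEq n] {N : Matrix n n K}
    {v w : n → K} (hvw : LinearIndependent K ![v, w]) (hv : N *ᵥ v = 0) (hw : N *ᵥ w = 0)
    (j : n) (r : n → K) : (N.updateRow j r).det = 0 := by
  obtain ⟨x, hx, hNx, hrx⟩ := exists_mulVec_eq_zero_dotProduct_eq_zero hvw hv hw r
  exact exists_mulVec_eq_zero_iff.mp ⟨x, hx, by simp [updateRow_mulVec, hNx, hrx]⟩

theorem exists_ne_zero_sum_smul_mulVec_eq_zero {ι : Type*} [Fintype ι] (A : ι → Matrix n n K)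
    (hcard : Fintype.card n < Fintype.card ι) (v : n → K) :
    ∃ z : ι → K, z ≠ 0 ∧ (∑ m, z m • A m) *ᵥ v = 0 := by
  have hker : LinearMap.ker (Fintype.linearCombination K fun m => A m *ᵥ v) ≠ ⊥ :=
    LinearMap.ker_ne_bot_of_finrank_lt (by simpa using hcard)
  obtain ⟨z, hz, hz0⟩ := (Submodule.ne_bot_iff _).mp hker
  refine ⟨z, hz0, ?_⟩
  simpa [Fintype.linearCombination_apply, sum_mulVec, smul_mulVec] using hz

theorem exists_eq_smul_one_of_forall_not_linearIndependent [DecidableEq n] {W : Matrix n n K}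
    (h : ∀ v, ¬LinearIndependent K ![v, W *ᵥ v]) : ∃ k : K, W = k • 1 := by
  obtain ⟨k, hk⟩ :=
    LinearMap.exists_eq_smul_id_of_forall_notLinearIndependent (f := toLin' W) h
  exact ⟨k, toLin'.injective (by rw [hk, map_smul, toLin'_one]; rfl)⟩

end Matrix

section LinearPencil

variable {ι n R : Type*} [Fintype ι] [CommRing R]

noncomputable def linearPencil (A : ι → Matrix n n R) : Matrix n n (MvPolynomial ι R) :=
  of fun i j => ∑ m, C (A m i j) * X m

theorem linearPencil_map_eval (A : ι → Matrix n n R) (z : ι → R) :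
    (linearPencil A).map (eval z) = ∑ m, z m • A m := by
  ext i j
  simp [linearPencil, Matrix.sum_apply, mul_comm]

variable [Fintype n] [DecidableEq n]

theorem eval_det_linearPencil (A : ι → Matrix n n R) (z : ι → R) :
    eval z (linearPencil A).det = (∑ m, z m • A m).det := by
  rw [RingHom.map_det, RingHom.mapMatrix_apply, linearPencil_map_eval]

theorem exists_ne_zero_of_det_linearPencil_ne_zero [Nonempty n] {A : ι → Matrix n n R}
    (h : (linearPencil A).det ≠ 0) : ∃ m, A m ≠ 0 := by
  contrapose! h
  have hzero : linearPencil A = 0 := by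
    ext i j
    simp [linearPencil, h]
  rw [hzero, det_zero]

variable [DecidableEq ι]

theorem eval_pderiv_det_linearPencil (A : ι → Matrix n n R) (z : ι → R) (i : ι) :
    eval z (pderiv i (linearPencil A).det)
      = ∑ j, ((∑ m, z m • A m).updateRow j (A i j)).det := by
  rw [Derivation.map_det, map_sum]
  refine Finset.sum_congr rfl fun j _ => ?_
  rw [RingHom.map_det, RingHom.mapMatrix_apply, map_updateRow, linearPencil_map_eval]
  congr 2
  ext k
  simp [linearPencil, Pi.single_apply]

variable {K : Type*} [Field K]

theorem eval_pderiv_det_linearPencil_eq_zero {A : ι → Matrix n n K} {z : ι → K}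
    {v w : n → K} (hvw : LinearIndependent K ![v, w]) (hv : (∑ m, z m • A m) *ᵥ v = 0)
    (hw : (∑ m, z m • A m) *ᵥ w = 0) (i : ι) :
    eval z (pderiv i (linearPencil A).det) = 0 := by
  rw [eval_pderiv_det_linearPencil]
  exact Finset.sum_eq_zero fun j _ => det_updateRow_eq_zero_of_linearIndependent hvw hv hw j _

theorem not_linearIndependent_of_mulVec_eq_zero {A : ι → Matrix n n K} {P : MvPolynomial ι K}
    {c : K} (hc : c ≠ 0) (hdet : (linearPencil A).det = C c * P)
    (hsmooth : ∀ z : ι → K, z ≠ 0 → eval z P = 0 → ∃ i, eval z (pderiv i P) ≠ 0)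
    {z : ι → K} (hz : z ≠ 0) {v w : n → K} (hv : (∑ m, z m • A m) *ᵥ v = 0)
    (hw : (∑ m, z m • A m) *ᵥ w = 0) : ¬LinearIndependent K ![v, w] := by
  intro hvw
  have hPz : eval z P = 0 := by
    have hdet0 := exists_mulVec_eq_zero_iff.mp ⟨v, hvw.ne_zero 0, hv⟩
    rw [← eval_det_linearPencil, hdet, eval_mul, eval_C] at hdet0
    exact (mul_eq_zero.mp hdet0).resolve_left hc
  obtain ⟨i, hi⟩ := hsmooth z hz hPz
  have hgrad := eval_pderiv_det_linearPencil_eq_zero hvw hv hw i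
  rw [hdet, pderiv_C_mul, eval_mul, eval_C] at hgrad
  exact hi ((mul_eq_zero.mp hgrad).resolve_left hc)

end LinearPencil

section Hermitian

variable {n K : Type*} [Fintype n] [Field K] [StarRing K]

theorem isUnit_det_conjTranspose [DecidableEq n] {X : Matrix n n K} (hX : IsUnit X.det) :
    IsUnit Xᴴ.det :=
  det_conjTranspose X ▸ hX.star

theorem mul_eq_conjTranspose_mul_of_isHermitian [DecidableEq n] {A X Y : Matrix n n K}
    (hA : A.IsHermitian) (hB : (X * A * Y).IsHermitian) (hX : IsUnit X.det) :
    A * (Y * Xᴴ⁻¹) = (Y * Xᴴ⁻¹)ᴴ * A := by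
  have hXH := isUnit_det_conjTranspose hX
  have hsymm : Yᴴ * A * Xᴴ = X * A * Y := by
    rw [← hB.eq, conjTranspose_mul, conjTranspose_mul, hA.eq, mul_assoc]
  rw [conjTranspose_mul, conjTranspose_nonsing_inv, conjTranspose_conjTranspose]
  calc A * (Y * Xᴴ⁻¹) = X⁻¹ * (X * A * Y) * Xᴴ⁻¹ := by
        simp only [Matrix.mul_assoc, nonsing_inv_mul_cancel_left _ _ hX]
    _ = X⁻¹ * Yᴴ * A := by
        rw [← hsymm]
        simp only [Matrix.mul_assoc, mul_nonsing_inv _ hXH, Matrix.mul_one]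

theorem star_eq_of_isHermitian_smul {M : Matrix n n K} (hM : M.IsHermitian) (hM0 : M ≠ 0)
    {k : K} (hkM : (k • M).IsHermitian) : star k = k := by
  have h : (star k - k) • M = 0 := by
    rw [sub_smul, ← hM.eq, ← conjTranspose_smul, hkM.eq, hM.eq, sub_self]
  exact sub_eq_zero.mp ((smul_eq_zero.mp h).resolve_right hM0)

theorem smul_mul_mul_conjTranspose_smul {R : Type*} [CommRing R] [StarRing R] (c : R)
    (X M : Matrix n n R) : (c • X) * M * (c • X)ᴴ = (c * star c) • (X * M * Xᴴ) := by
  rw [conjTranspose_smul, Matrix.smul_mul, Matrix.smul_mul, Matrix.mul_smul, smul_smul]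

end Hermitian

section HermitianPencil

variable {ι n : Type*} [Fintype ι] [DecidableEq ι] [Fintype n] [DecidableEq n]

theorem exists_eq_smul_conjTranspose_of_isHermitian {K : Type*} [Field K] [StarRing K]
    {A B : ι → Matrix n n K} (hA : ∀ m, (A m).IsHermitian) (hB : ∀ m, (B m).IsHermitian)
    {P : MvPolynomial ι K} {c : K} (hc : c ≠ 0) (hdet : (linearPencil A).det = C c * P)
    (hsmooth : ∀ z : ι → K, z ≠ 0 → eval z P = 0 → ∃ i, eval z (pderiv i P) ≠ 0)
    (hcard : Fintype.card n < Fintype.card ι) {X Y : Matrix n n K} (hX : IsUnit X.det)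
    (hXY : ∀ m, B m = X * A m * Y) : ∃ k : K, Y = k • Xᴴ := by
  set W := Y * Xᴴ⁻¹
  have hW : ∀ z : ι → K, (∑ m, z m • A m) * W = Wᴴ * ∑ m, z m • A m := fun z => by
    simp only [Finset.sum_mul, Finset.mul_sum, smul_mul_assoc, mul_smul_comm]
    exact Finset.sum_congr rfl fun m _ => by
      rw [mul_eq_conjTranspose_mul_of_isHermitian (hA m) (hXY m ▸ hB m) hX]
  have heigen : ∀ v, ¬LinearIndependent K ![v, W *ᵥ v] := by
    intro v
    obtain ⟨z, hz, hv⟩ := exists_ne_zero_sum_smul_mulVec_eq_zero A hcard v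
    refine not_linearIndependent_of_mulVec_eq_zero hc hdet hsmooth hz hv ?_
    rw [mulVec_mulVec, hW, ← mulVec_mulVec, hv, mulVec_zero]
  obtain ⟨k, hk⟩ := exists_eq_smul_one_of_forall_not_linearIndependent heigen
  have hXH := isUnit_det_conjTranspose hX
  refine ⟨k, ?_⟩
  calc Y = W * Xᴴ := (nonsing_inv_mul_cancel_right _ _ hXH).symm
    _ = k • Xᴴ := by rw [hk, Matrix.smul_mul, Matrix.one_mul]

theorem exists_real_smul_conjTranspose_of_isHermitian [Nonempty ι] [Nonempty n]
    {A B : ι → Matrix n n ℂ} (hA : ∀ m, (A m).IsHermitian) (hB : ∀ m, (B m).IsHermitian)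
    {P : MvPolynomial ι ℂ} {c : ℂ} (hc : c ≠ 0) (hdet : (linearPencil A).det = C c * P)
    (hsmooth : ∀ z : ι → ℂ, z ≠ 0 → eval z P = 0 → ∃ i, eval z (pderiv i P) ≠ 0)
    (hcard : Fintype.card n < Fintype.card ι) {X Y : Matrix n n ℂ} (hX : IsUnit X.det)
    (hY : IsUnit Y.det) (hXY : ∀ m, B m = X * A m * Y) :
    ∃ r : ℝ, r ≠ 0 ∧ Y = (r : ℂ) • Xᴴ := by
  obtain ⟨k, rfl⟩ :=
    exists_eq_smul_conjTranspose_of_isHermitian hA hB hc hdet hsmooth hcard hX hXY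
  have hP : P ≠ 0 := by
    rintro rfl
    obtain ⟨i, hi⟩ := hsmooth 1 one_ne_zero (map_zero _)
    simp at hi
  obtain ⟨m, hm⟩ := exists_ne_zero_of_det_linearPencil_ne_zero
    (hdet ▸ mul_ne_zero (C_ne_zero.mpr hc) hP)
  have hXH := isUnit_det_conjTranspose hX
  have hXAX : X * A m * Xᴴ ≠ 0 := fun h => hm <| by
    simpa [Matrix.mul_assoc, nonsing_inv_mul_cancel_left _ _ hX, mul_nonsing_inv _ hXH] using
      congrArg (X⁻¹ * · * Xᴴ⁻¹) h
  have hreal : star k = k := star_eq_of_isHermitian_smul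
    (isHermitian_mul_mul_conjTranspose X (hA m)) hXAX (by simpa [hXY m] using hB m)
  obtain ⟨r, rfl⟩ := Complex.conj_eq_iff_real.mp hreal
  refine ⟨r, fun hr => ?_, rfl⟩
  simp [hr] at hY

end HermitianPencil

theorem hermitianEquiv_or_neg_of_eq_real_smul {ι n : Type*} [Fintype n] [DecidableEq n]
    {A B : ι → Matrix n n ℂ} {X : Matrix n n ℂ} (hX : IsUnit X.det) {r : ℝ} (hr : r ≠ 0)
    (hXY : ∀ m, B m = X * A m * ((r : ℂ) • Xᴴ)) :
    (∃ X' : Matrix n n ℂ, IsUnit X'.det ∧ ∀ m, B m = X' * A m * X'ᴴ) ∨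
      (∃ X' : Matrix n n ℂ, IsUnit X'.det ∧ ∀ m, -B m = X' * A m * X'ᴴ) := by
  set X' := (√|r| : ℂ) • X
  have hX' : IsUnit X'.det := by
    rw [det_smul]
    exact ((isUnit_iff_ne_zero.mpr (by simpa using hr)).pow _).mul hX
  have hscale : ∀ m, X' * A m * X'ᴴ = ((|r| : ℝ) : ℂ) • (X * A m * Xᴴ) := fun m => by
    rw [smul_mul_mul_conjTranspose_smul, Complex.star_def, Complex.conj_ofReal,
      ← Complex.ofReal_mul, Real.mul_self_sqrt (abs_nonneg r)]
  rcases hr.lt_or_gt with hneg | hpos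
  · refine .inr ⟨X', hX', fun m => ?_⟩
    rw [hscale, hXY, abs_of_neg hneg, Matrix.mul_smul, Complex.ofReal_neg, neg_smul]
  · refine .inl ⟨X', hX', fun m => ?_⟩
    rw [hscale, hXY, abs_of_pos hpos, Matrix.mul_smul]

theorem stmt11_general
    (A B : Fin 4 → Matrix (Fin 3) (Fin 3) ℂ)
    (hA : ∀ m, (A m).IsHermitian) (hB : ∀ m, (B m).IsHermitian)
    (F : MvPolynomial (Fin 4) ℝ)
    (hsmooth : ∀ z : Fin 4 → ℂ, z ≠ 0 → eval z (F.map (algebraMap ℝ ℂ)) = 0 →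
      ∃ i, eval z (pderiv i (F.map (algebraMap ℝ ℂ))) ≠ 0)
    (cA : ℂ) (hcA : cA ≠ 0)
    (hdA : (Matrix.of fun i j => ∑ m : Fin 4, C (A m i j) * X m).det
      = C cA * F.map (algebraMap ℝ ℂ)) :
    (∀ X' Y' : Matrix (Fin 3) (Fin 3) ℂ, IsUnit X'.det → IsUnit Y'.det →
      (∀ m, B m = X' * A m * Y') →
      ∃ r : ℝ, r ≠ 0 ∧ Y' = (r : ℂ) • X'.conjTranspose) ∧
    ((∃ X' Y' : Matrix (Fin 3) (Fin 3) ℂ, IsUnit X'.det ∧ IsUnit Y'.det ∧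
        ∀ m, B m = X' * A m * Y') ↔
      ((∃ X' : Matrix (Fin 3) (Fin 3) ℂ, IsUnit X'.det ∧
          ∀ m, B m = X' * A m * X'.conjTranspose) ∨
       (∃ X' : Matrix (Fin 3) (Fin 3) ℂ, IsUnit X'.det ∧
          ∀ m, -(B m) = X' * A m * X'.conjTranspose))) := by
  have hreal : ∀ X' Y' : Matrix (Fin 3) (Fin 3) ℂ, IsUnit X'.det → IsUnit Y'.det →
      (∀ m, B m = X' * A m * Y') → ∃ r : ℝ, r ≠ 0 ∧ Y' = (r : ℂ) • X'ᴴ :=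
    fun _ _ hX hY hXY => exists_real_smul_conjTranspose_of_isHermitian hA hB hcA hdA hsmooth
      (by simp) hX hY hXY
  refine ⟨hreal, fun ⟨X', Y', hX, hY, hXY⟩ => ?_, ?_⟩
  · obtain ⟨r, hr, rfl⟩ := hreal X' Y' hX hY hXY
    exact hermitianEquiv_or_neg_of_eq_real_smul hX hr hXY
  · rintro (⟨X', hX, hXY⟩ | ⟨X', hX, hXY⟩)
    · exact ⟨X', X'ᴴ, hX, isUnit_det_conjTranspose hX, hXY⟩
    · refine ⟨X', -X'ᴴ, hX, ?_, fun m => by rw [Matrix.mul_neg, ← hXY, neg_neg]⟩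
      rw [det_neg]
      exact ((isUnit_neg_one).pow _).mul (isUnit_det_conjTranspose hX)

/-- Let `U1 = Σ zₘ Aₘ` and `U2 = Σ zₘ Bₘ` be self-adjoint determinantal representations
of the same real smooth cubic surface `F = 0`, corresponding to the same six skew lines.
If `U2 = X·U1·Y` with `X, Y ∈ GL₃(ℂ)`, then `Y = k·X*` for a nonzero real `k`;
consequently `U1` and `U2` are equivalent iff `U1` is hermitean equivalent to
`U2` or to `−U2`. -/
theorem stmt11
    (A B : Fin 4 → Matrix (Fin 3) (Fin 3) ℂ)
    (hA : ∀ m, (A m).IsHermitian) (hB : ∀ m, (B m).IsHermitian)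
    (F : MvPolynomial (Fin 4) ℝ)
    (hF3 : (F.map (algebraMap ℝ ℂ)).IsHomogeneous 3)
    (hsmooth : ∀ z : Fin 4 → ℂ, z ≠ 0 → eval z (F.map (algebraMap ℝ ℂ)) = 0 →
      ∃ i, eval z (pderiv i (F.map (algebraMap ℝ ℂ))) ≠ 0)
    (cA cB : ℂ) (hcA : cA ≠ 0) (hcB : cB ≠ 0)
    (hdA : (Matrix.of fun i j => ∑ m : Fin 4, C (A m i j) * X m).det
      = C cA * F.map (algebraMap ℝ ℂ))
    (hdB : (Matrix.of fun i j => ∑ m : Fin 4, C (B m i j) * X m).det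
      = C cB * F.map (algebraMap ℝ ℂ))
    -- the two representations correspond to the same six skew lines
    (hlines : ∃ p q : Fin 6 → (Fin 3 → ℂ),
      (∀ i j l : Fin 6, i ≠ j → i ≠ l → j ≠ l →
        LinearIndependent ℂ ![p i, p j, p l]) ∧
      (∀ i, {z : Fin 4 → ℂ | (∑ m, z m • A m).mulVec (p i) = 0}
          = {z : Fin 4 → ℂ | (∑ m, z m • B m).mulVec (q i) = 0})) :
    (∀ X' Y' : Matrix (Fin 3) (Fin 3) ℂ, IsUnit X'.det → IsUnit Y'.det →
      (∀ m, B m = X' * A m * Y') →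
      ∃ r : ℝ, r ≠ 0 ∧ Y' = (r : ℂ) • X'.conjTranspose) ∧
    ((∃ X' Y' : Matrix (Fin 3) (Fin 3) ℂ, IsUnit X'.det ∧ IsUnit Y'.det ∧
        ∀ m, B m = X' * A m * Y') ↔
      ((∃ X' : Matrix (Fin 3) (Fin 3) ℂ, IsUnit X'.det ∧
          ∀ m, B m = X' * A m * X'.conjTranspose) ∨
       (∃ X' : Matrix (Fin 3) (Fin 3) ℂ, IsUnit X'.det ∧
          ∀ m, -(B m) = X' * A m * X'.conjTranspose))) :=
  stmt11_general A B hA hB F hsmooth cA hcA hdA
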